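/- The sequence (i_n)_{n ≥ 0} contains a cube of period ℓ (i.e., there exists a position p with i_{p+j+ℓ} = i_{p+j} for all 0 ≤ j < 2ℓ) if and only if ℓ = 3. -/

import Mathlib

/-!
Appending a bit to `n` gives `inv2 (2n+1) = inv2 n` and `inv2 (2n) = inv2 n + s₂(n)`, with `s₂`
the binary digit sum, so `i (2n+1) = i n` and `i (2n) = i n * t n` for the Thue–Morse sequence
`t n = (-1)^s₂(n)`.
By induction, `i (n+1) = i n` exactly when `t n = 1` and `t (n+1) = -1`.

A cube of even period `2k` makes the pair sequence `(i, t)` repeat with period `k` on `3k - 1`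
consecutive terms; halving `k` reduces this to `k` odd, where it forces three equal consecutive
Thue–Morse terms (or, for `k = 1`, contradicts the characterisation of `i (n+1) = i n`).
Odd periods `ℓ ≥ 5` are excluded by reading the cube through the residues of positions mod 4,
`ℓ = 1` directly, and `i` starts with the cube `(1, 1, -1)³`.
-/

/-- `inv2 n` is the number of inversions in the binary representation of `n`,
i.e. the number of pairs of bit positions `a > b` such that bit `a` of `n` is `1`
and bit `b` of `n` is `0`. -/
def inv2 (n : ℕ) : ℕ :=
  ((Finset.range (n + 1) ×ˢ Finset.range (n + 1)).filter
    (fun p => p.2 < p.1 ∧ n.testBit p.1 = true ∧ n.testBit p.2 = false)).card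

/-- `iSeq n = (-1)^(inv2 n)`. -/
def iSeq (n : ℕ) : ℤ := (-1) ^ inv2 n

open Finset

def bitInversions (N n : ℕ) : ℕ :=
  ∑ a ∈ range N, ∑ b ∈ range N, if b < a ∧ n.testBit a = true ∧ n.testBit b = false then 1 else 0

lemma inv2_eq_bitInversions (n : ℕ) : inv2 n = bitInversions (n + 1) n := by
  rw [inv2, card_filter, sum_product]; rfl

lemma bitInversions_succ_of_testBit_eq_false {N n : ℕ} (h : n.testBit N = false) :
    bitInversions (N + 1) n = bitInversions N n := by
  simp only [bitInversions, sum_range_succ, h, Bool.false_eq_true, false_and, and_false,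
    if_false, sum_const_zero, add_zero]
  refine sum_congr rfl fun a ha => ?_
  simp [(mem_range.1 ha).not_gt]

lemma bitInversions_eq_of_lt_two_pow {N M n : ℕ} (h : n < 2 ^ N) (hNM : N ≤ M) :
    bitInversions M n = bitInversions N n := by
  induction M, hNM using Nat.le_induction with
  | base => rfl
  | succ M hNM ih =>
    rw [bitInversions_succ_of_testBit_eq_false, ih]
    exact Nat.testBit_eq_false_of_lt (h.trans_le (Nat.pow_le_pow_right two_pos hNM))

lemma bitInversions_eq_inv2 {N n : ℕ} (h : n < 2 ^ N) : bitInversions N n = inv2 n := by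
  have h' : n < 2 ^ (n + 1) := n.lt_two_pow_self.trans (Nat.pow_lt_pow_succ one_lt_two)
  rw [inv2_eq_bitInversions, ← bitInversions_eq_of_lt_two_pow h (le_max_left N (n + 1)),
    bitInversions_eq_of_lt_two_pow h' (le_max_right N (n + 1))]

lemma bitInversions_succ (N n : ℕ) :
    bitInversions (N + 1) n = bitInversions N (n / 2) +
      if n.testBit 0 then 0 else ∑ a ∈ range N, if (n / 2).testBit a then 1 else 0 := by
  simp only [bitInversions, sum_range_succ', Nat.testBit_add_one, add_lt_add_iff_right,
    Nat.not_lt_zero, false_and, if_false, sum_const_zero, add_zero, Nat.zero_lt_succ, true_and,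
    sum_add_distrib]
  congr 1
  cases n.testBit 0 <;> simp

lemma sum_testBit_eq_length_bitIndices {N n : ℕ} (h : n < 2 ^ N) :
    ∑ a ∈ range N, (if n.testBit a then 1 else 0) = n.bitIndices.length := by
  rw [← card_filter, ← List.toFinset_card_of_nodup Nat.bitIndices_nodup]
  congr 1
  ext a
  simp only [mem_filter, mem_range, List.mem_toFinset, Nat.mem_bitIndices, and_iff_right_iff_imp]
  exact fun ha =>
    (Nat.pow_lt_pow_iff_right one_lt_two).1 ((Nat.ge_two_pow_of_testBit ha).trans_lt h)

lemma lt_two_pow_two_mul (n : ℕ) : n < 2 ^ (2 * n) :=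
  n.lt_two_pow_self.trans_le (Nat.pow_le_pow_right two_pos (by omega))

lemma inv2_two_mul_add_one (n : ℕ) : inv2 (2 * n + 1) = inv2 n := by
  have h : (2 * n + 1) / 2 = n := by omega
  rw [inv2_eq_bitInversions, bitInversions_succ, h,
    bitInversions_eq_inv2 ((lt_two_pow_two_mul n).trans (Nat.pow_lt_pow_succ one_lt_two))]
  simp

lemma inv2_two_mul (n : ℕ) : inv2 (2 * n) = inv2 n + n.bitIndices.length := by
  have h := lt_two_pow_two_mul n
  rw [inv2_eq_bitInversions, bitInversions_succ, Nat.mul_div_cancel_left n two_pos,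
    bitInversions_eq_inv2 h, sum_testBit_eq_length_bitIndices h]
  simp

def tm (n : ℕ) : ℤ := (-1) ^ n.bitIndices.length

@[simp] lemma tm_two_mul (n : ℕ) : tm (2 * n) = tm n := by simp [tm]

@[simp] lemma tm_two_mul_add_one (n : ℕ) : tm (2 * n + 1) = -tm n := by simp [tm, pow_succ]

@[simp] lemma iSeq_two_mul (n : ℕ) : iSeq (2 * n) = iSeq n * tm n := by
  rw [iSeq, iSeq, inv2_two_mul, pow_add, tm]

@[simp] lemma iSeq_two_mul_add_one (n : ℕ) : iSeq (2 * n + 1) = iSeq n := by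
  rw [iSeq, inv2_two_mul_add_one, iSeq]

lemma iSeq_eq_one_or (n : ℕ) : iSeq n = 1 ∨ iSeq n = -1 := neg_one_pow_eq_or ℤ _

lemma tm_eq_one_or (n : ℕ) : tm n = 1 ∨ tm n = -1 := neg_one_pow_eq_or ℤ _

lemma iSeq_ne_zero (n : ℕ) : iSeq n ≠ 0 := pow_ne_zero _ (by decide)

lemma tm_mul_self (n : ℕ) : tm n * tm n = 1 := by
  rcases tm_eq_one_or n with h | h <;> simp [h]

lemma iSeq_succ_eq_iff (n : ℕ) : iSeq (n + 1) = iSeq n ↔ tm n = 1 ∧ tm (n + 1) = -1 := by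
  induction n using Nat.strong_induction_on with
  | _ n ih =>
  obtain ⟨q, rfl | rfl⟩ := Nat.even_or_odd' n
  · simp only [iSeq_two_mul_add_one, iSeq_two_mul, tm_two_mul, tm_two_mul_add_one]
    rcases iSeq_eq_one_or q with h | h <;> rcases tm_eq_one_or q with h' | h' <;> simp [h, h']
  · have ih := ih q (by omega)
    rw [show 2 * q + 1 + 1 = 2 * (q + 1) by ring]
    simp only [iSeq_two_mul_add_one, iSeq_two_mul, tm_two_mul, tm_two_mul_add_one]
    rcases iSeq_eq_one_or q with h1 | h1 <;> rcases iSeq_eq_one_or (q + 1) with h2 | h2 <;>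
      rcases tm_eq_one_or q with h3 | h3 <;> rcases tm_eq_one_or (q + 1) with h4 | h4 <;>
      simp_all

lemma tm_no_three_eq (s : ℕ) : ¬ (tm (s + 1) = tm s ∧ tm (s + 2) = tm (s + 1)) := by
  rintro ⟨h1, h2⟩
  obtain ⟨q, rfl | rfl⟩ := Nat.even_or_odd' s
  · rw [tm_two_mul_add_one, tm_two_mul] at h1
    rcases tm_eq_one_or q with h | h <;> rw [h] at h1 <;> norm_num at h1
  · rw [show 2 * q + 1 + 2 = 2 * (q + 1) + 1 by ring, show 2 * q + 1 + 1 = 2 * (q + 1) by ring,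
      tm_two_mul_add_one, tm_two_mul] at h2
    rcases tm_eq_one_or (q + 1) with h | h <;> rw [h] at h2 <;> norm_num at h2

def iTm (n : ℕ) : ℤ × ℤ := (iSeq n, tm n)

lemma iTm_succ_ne (n : ℕ) : iTm (n + 1) ≠ iTm n := by
  intro h
  obtain ⟨h0, h1⟩ := (iSeq_succ_eq_iff n).1 (congrArg Prod.fst h)
  have := congrArg Prod.snd h
  simp only [iTm, h0, h1] at this
  norm_num at this

lemma iTm_eq_of_iSeq_eq {a b : ℕ} (h0 : iSeq (2 * a) = iSeq (2 * b))
    (h1 : iSeq (2 * a + 1) = iSeq (2 * b + 1)) : iTm a = iTm b := by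
  simp only [iSeq_two_mul, iSeq_two_mul_add_one] at h0 h1
  rw [h1] at h0
  exact Prod.ext h1 (mul_left_cancel₀ (iSeq_ne_zero b) h0)

lemma iTm_two_mul_add_one_inj {a b : ℕ} : iTm (2 * a + 1) = iTm (2 * b + 1) ↔ iTm a = iTm b := by
  simp [iTm]

lemma tm_succ_eq_of_tm_eq {a j : ℕ} (h0 : tm (2 * a + (2 * j + 1)) = tm (2 * a))
    (h1 : tm (2 * a + 1 + (2 * j + 1)) = tm (2 * a + 1)) : tm (a + j + 1) = tm (a + j) := by
  rw [show 2 * a + (2 * j + 1) = 2 * (a + j) + 1 by ring, tm_two_mul_add_one, tm_two_mul] at h0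
  rw [show 2 * a + 1 + (2 * j + 1) = 2 * (a + j + 1) by ring, tm_two_mul,
    tm_two_mul_add_one] at h1
  rw [h1, ← h0, neg_neg]

lemma iTm_not_periodic {k : ℕ} (hk : 1 ≤ k) (p : ℕ) :
    ¬ ∀ r ∈ Set.Ico p (p + 2 * k - 1), iTm (r + k) = iTm r := by
  induction k using Nat.strong_induction_on generalizing p with
  | _ k ih =>
  intro h
  obtain ⟨k, rfl | rfl⟩ := Nat.even_or_odd' k
  · refine ih k (by omega) (by omega) ((p + 1) / 2) fun r ⟨hr1, hr2⟩ => ?_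
    rw [← iTm_two_mul_add_one_inj]
    simpa [mul_add, add_right_comm] using h (2 * r + 1) ⟨by omega, by omega⟩
  rcases Nat.eq_zero_or_pos k with rfl | hk
  · exact iTm_succ_ne p (h p ⟨le_rfl, by omega⟩)
  have ht : ∀ m, p ≤ m → m < p + 4 * k + 1 → tm (m + (2 * k + 1)) = tm m :=
    fun m h1 h2 => congrArg Prod.snd (h m ⟨h1, by omega⟩)
  set r := (p + 1) / 2 with hr
  refine tm_no_three_eq (r + k) ⟨?_, ?_⟩
  · exact tm_succ_eq_of_tm_eq (ht (2 * r) (by omega) (by omega))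
      (ht (2 * r + 1) (by omega) (by omega))
  · have := tm_succ_eq_of_tm_eq (a := r + 1) (ht (2 * (r + 1)) (by omega) (by omega))
      (ht (2 * (r + 1) + 1) (by omega) (by omega))
    rwa [show r + 1 + k = r + k + 1 by ring] at this

lemma iSeq_four_mul (n : ℕ) : iSeq (4 * n) = iSeq n := by
  rw [show 4 * n = 2 * (2 * n) by ring, iSeq_two_mul, iSeq_two_mul, tm_two_mul, mul_assoc,
    tm_mul_self, mul_one]

lemma iSeq_four_mul_add_one (n : ℕ) : iSeq (4 * n + 1) = iSeq n * tm n := by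
  rw [show 4 * n + 1 = 2 * (2 * n) + 1 by ring, iSeq_two_mul_add_one, iSeq_two_mul]

lemma iSeq_four_mul_add_two (n : ℕ) : iSeq (4 * n + 2) = -(iSeq n * tm n) := by
  rw [show 4 * n + 2 = 2 * (2 * n + 1) by ring, iSeq_two_mul, iSeq_two_mul_add_one,
    tm_two_mul_add_one, mul_neg]

lemma iSeq_four_mul_add_three (n : ℕ) : iSeq (4 * n + 3) = iSeq n := by
  rw [show 4 * n + 3 = 2 * (2 * n + 1) + 1 by ring, iSeq_two_mul_add_one, iSeq_two_mul_add_one]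

def IsCubeAt {α : Type*} (f : ℕ → α) (ℓ p : ℕ) : Prop :=
  ∀ m ∈ Set.Ico p (p + 2 * ℓ), f (m + ℓ) = f m

lemma IsCubeAt.apply_eq {α : Type*} {f : ℕ → α} {ℓ p : ℕ} (h : IsCubeAt f ℓ p) {m n : ℕ}
    (hm : p ≤ m) (hm' : m < p + 2 * ℓ) (hn : m + ℓ = n) : f n = f m :=
  hn ▸ h m ⟨hm, hm'⟩

lemma not_isCubeAt_one (p : ℕ) : ¬ IsCubeAt iSeq 1 p := by
  intro h
  have h0 := ((iSeq_succ_eq_iff p).1 (h p ⟨le_rfl, by omega⟩)).2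
  have h1 := ((iSeq_succ_eq_iff (p + 1)).1 (h (p + 1) ⟨by omega, by omega⟩)).1
  rw [h0] at h1
  norm_num at h1

lemma not_isCubeAt_two_mul {k : ℕ} (hk : 1 ≤ k) (p : ℕ) : ¬ IsCubeAt iSeq (2 * k) p := by
  intro h
  refine iTm_not_periodic hk ((p + 1) / 2) fun r ⟨hr1, hr2⟩ => iTm_eq_of_iSeq_eq ?_ ?_
  · exact h.apply_eq (by omega) (by omega) (by ring)
  · exact h.apply_eq (by omega) (by omega) (by ring)

lemma not_isCubeAt_four_mul_add_one {i : ℕ} (hi : 1 ≤ i) (p : ℕ) :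
    ¬ IsCubeAt iSeq (4 * i + 1) p := by
  -- Positions `4b, 4b+1` force `tm b = -1` for `b = r, r+1`; positions `4r+3, 4r+6` then give
  -- `iSeq (r+1) = iSeq r`, which needs `tm r = 1`.
  intro h
  set r := (p + 3) / 4 with hr
  have htm : ∀ b, r ≤ b → b ≤ r + 1 → tm b = -1 := by
    intro b hb hb'
    have h0 := h.apply_eq (m := 4 * b) (n := 4 * (b + i) + 1) (by omega) (by omega) (by ring)
    have h1 := h.apply_eq (m := 4 * b + 1) (n := 4 * (b + i) + 2) (by omega) (by omega) (by ring)
    rw [iSeq_four_mul_add_one, iSeq_four_mul] at h0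
    rw [iSeq_four_mul_add_two, iSeq_four_mul_add_one, h0, ← mul_neg_one] at h1
    exact (mul_left_cancel₀ (iSeq_ne_zero b) h1).symm
  have h3 := h.apply_eq (m := 4 * r + 3) (n := 4 * (r + i + 1)) (by omega) (by omega) (by ring)
  have h6 := h.apply_eq (m := 4 * (r + 1) + 2) (n := 4 * (r + i + 1) + 3) (by omega) (by omega)
    (by ring)
  rw [iSeq_four_mul, iSeq_four_mul_add_three] at h3
  rw [iSeq_four_mul_add_three, iSeq_four_mul_add_two, htm (r + 1) (by omega) le_rfl, h3] at h6
  have := ((iSeq_succ_eq_iff r).1 (by rw [h6]; ring)).1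
  rw [htm r le_rfl (by omega)] at this
  norm_num at this

lemma not_isCubeAt_four_mul_add_three {i : ℕ} (hi : 1 ≤ i) (p : ℕ) :
    ¬ IsCubeAt iSeq (4 * i + 3) p := by
  -- Positions `4b+2, 4b+3` force `tm b = 1` for `b = r, r+1`; positions `4r+1, 4r+4` then give
  -- `iSeq (r+1) = iSeq r`, which needs `tm (r+1) = -1`.
  intro h
  set r := (p + 3) / 4 with hr
  have htm : ∀ b, r ≤ b → b ≤ r + 1 → tm b = 1 := by
    intro b hb hb'
    have h2 := h.apply_eq (m := 4 * b + 2) (n := 4 * (b + i + 1) + 1) (by omega) (by omega)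
      (by ring)
    have h3 := h.apply_eq (m := 4 * b + 3) (n := 4 * (b + i + 1) + 2) (by omega) (by omega)
      (by ring)
    rw [iSeq_four_mul_add_one, iSeq_four_mul_add_two] at h2
    rw [iSeq_four_mul_add_two, iSeq_four_mul_add_three, h2, neg_neg] at h3
    exact mul_left_cancel₀ (iSeq_ne_zero b) (h3.trans (mul_one _).symm)
  have h1 := h.apply_eq (m := 4 * r + 1) (n := 4 * (r + i + 1)) (by omega) (by omega) (by ring)
  have h4 := h.apply_eq (m := 4 * (r + 1)) (n := 4 * (r + i + 1) + 3) (by omega) (by omega)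
    (by ring)
  rw [iSeq_four_mul, iSeq_four_mul_add_one, htm r le_rfl (by omega), mul_one] at h1
  rw [iSeq_four_mul_add_three, iSeq_four_mul, h1] at h4
  have := ((iSeq_succ_eq_iff r).1 h4.symm).2
  rw [htm (r + 1) (by omega) le_rfl] at this
  norm_num at this

theorem cube_periods (ℓ : ℕ) (hℓ : 1 ≤ ℓ) :
    (∃ p : ℕ, ∀ j < 2 * ℓ, iSeq (p + j + ℓ) = iSeq (p + j)) ↔ ℓ = 3 := by
  refine ⟨fun ⟨p, hp⟩ => ?_, fun h => h ▸ ⟨0, by decide⟩⟩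
  have hcube : IsCubeAt iSeq ℓ p := fun m ⟨hm, hm'⟩ => by
    simpa [Nat.add_sub_cancel' hm] using hp (m - p) (by omega)
  obtain ⟨k, rfl | rfl⟩ := Nat.even_or_odd' ℓ
  · exact absurd hcube (not_isCubeAt_two_mul (by omega) p)
  obtain ⟨i, rfl | rfl⟩ := Nat.even_or_odd' k
  · rcases Nat.eq_zero_or_pos i with rfl | hi
    · exact absurd hcube (not_isCubeAt_one p)
    · exact absurd (by rwa [show 2 * (2 * i) + 1 = 4 * i + 1 by ring] at hcube)
        (not_isCubeAt_four_mul_add_one hi p)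
  · rcases Nat.eq_zero_or_pos i with rfl | hi
    · rfl
    · exact absurd (by rwa [show 2 * (2 * i + 1) + 1 = 4 * i + 3 by ring] at hcube)
        (not_isCubeAt_four_mul_add_three hi p)
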